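/- The free Lie algebra L on two generators α, β equals the sum of the F-linear span of the set {β} ∪ {(-ad β)^n(α) : n ∈ ℕ} and the Lie ideal of L generated by the elements (ad α)((-ad β)^n(α)) for all integers n ≥ 1. -/
import Mathlib


noncomputable section

/-- The free Lie algebra on two generators. -/
abbrev FL (F : Type) [Field F] := FreeLieAlgebra F (Fin 2)

/-- The generator `α`. -/
def FL.α (F : Type) [Field F] : FL F := FreeLieAlgebra.of F 0

/-- The generator `β`. -/
def FL.β (F : Type) [Field F] : FL F := FreeLieAlgebra.of F 1

/-- `(-ad β)^n (α)`, noting `(-ad β)(y) = -⁅β, y⁆ = ⁅y, β⁆`. -/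
def FL.negAdBetaPowAlpha (F : Type) [Field F] (n : ℕ) : FL F :=
  (fun y => ⁅y, FL.β F⁆)^[n] (FL.α F)

namespace FLaux

variable (F : Type) [Field F]

local notation "a" => FL.negAdBetaPowAlpha F

lemma a_zero : FL.negAdBetaPowAlpha F 0 = FL.α F := rfl

lemma a_succ (n : ℕ) :
    FL.negAdBetaPowAlpha F (n + 1) = ⁅FL.negAdBetaPowAlpha F n, FL.β F⁆ := by
  simp [FL.negAdBetaPowAlpha, Function.iterate_succ_apply']

/-- The ideal. -/
def I : LieIdeal F (FL F) :=
  LieSubmodule.lieSpan F (FL F)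
    {x | ∃ n : ℕ, 1 ≤ n ∧ x = ⁅FL.α F, FL.negAdBetaPowAlpha F n⁆}

lemma lie_beta_a (m : ℕ) : ⁅FL.β F, FL.negAdBetaPowAlpha F m⁆
    = -(FL.negAdBetaPowAlpha F (m + 1)) := by
  rw [a_succ, ← lie_skew]

lemma lie_a_a_mem (n m : ℕ) :
    ⁅FL.negAdBetaPowAlpha F n, FL.negAdBetaPowAlpha F m⁆ ∈ I F := by
  induction n generalizing m with
  | zero =>
    cases m with
    | zero => simp [a_zero]
    | succ k =>
      exact LieSubmodule.subset_lieSpan ⟨k + 1, Nat.succ_le_succ (Nat.zero_le _), rfl⟩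
  | succ n ih =>
    rw [a_succ, lie_lie, lie_beta_a, lie_neg]
    exact sub_mem (neg_mem (ih (m + 1))) (LieSubmodule.lie_mem _ (ih m))

/-- The span generating set. -/
def G : Set (FL F) := {FL.β F} ∪ Set.range (FL.negAdBetaPowAlpha F)

/-- The candidate subalgebra, as a submodule. -/
def S : Submodule F (FL F) := Submodule.span F (G F) ⊔ (I F).toSubmodule

lemma lie_gen_gen_mem {x y : FL F} (hx : x ∈ G F) (hy : y ∈ G F) : ⁅x, y⁆ ∈ S F := by
  have hspan : ∀ z ∈ G F, z ∈ S F := fun z hz =>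
    le_sup_left (α := Submodule F (FL F)) (Submodule.subset_span hz)
  rcases hx with hx | ⟨n, rfl⟩
  · rcases hy with hy | ⟨m, rfl⟩
    · rw [Set.mem_singleton_iff] at hx hy; subst hx; subst hy; simp
    · rw [Set.mem_singleton_iff] at hx; subst hx
      rw [lie_beta_a]
      exact neg_mem (hspan _ (Or.inr ⟨m + 1, rfl⟩))
  · rcases hy with hy | ⟨m, rfl⟩
    · rw [Set.mem_singleton_iff] at hy; subst hy
      rw [← a_succ]
      exact hspan _ (Or.inr ⟨n + 1, rfl⟩)
    · exact le_sup_right (α := Submodule F (FL F)) (lie_a_a_mem F n m)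

lemma lie_span_span_mem {x y : FL F} (hx : x ∈ Submodule.span F (G F))
    (hy : y ∈ Submodule.span F (G F)) : ⁅x, y⁆ ∈ S F := by
  induction hx using Submodule.span_induction with
  | mem z hz =>
    induction hy using Submodule.span_induction with
    | mem w hw => exact lie_gen_gen_mem F hz hw
    | zero => simp
    | add u v _ _ hu hv => rw [lie_add]; exact add_mem hu hv
    | smul c u _ hu => rw [lie_smul]; exact Submodule.smul_mem _ _ hu
  | zero => simp
  | add u v _ _ hu hv => rw [add_lie]; exact add_mem hu hv
  | smul c u _ hu => rw [smul_lie]; exact Submodule.smul_mem _ _ hu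

lemma lie_S_S_mem {x y : FL F} (hx : x ∈ S F) (hy : y ∈ S F) : ⁅x, y⁆ ∈ S F := by
  rcases Submodule.mem_sup.mp hx with ⟨s, hs, i, hi, rfl⟩
  rcases Submodule.mem_sup.mp hy with ⟨t, ht, j, hj, rfl⟩
  have hIS : ∀ {z : FL F}, z ∈ I F → z ∈ S F := fun hz =>
    le_sup_right (α := Submodule F (FL F)) hz
  have h1 : ⁅s, t⁆ ∈ S F := lie_span_span_mem F hs ht
  have h2 : ⁅s, j⁆ ∈ S F := hIS (LieSubmodule.lie_mem _ hj)
  have h3 : ⁅i, t + j⁆ ∈ S F := by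
    rw [← lie_skew]
    exact neg_mem (hIS (LieSubmodule.lie_mem _ hi))
  have : ⁅s + i, t + j⁆ = (⁅s, t⁆ + ⁅s, j⁆) + ⁅i, t + j⁆ := by
    rw [add_lie, lie_add]
  rw [this]
  exact add_mem (add_mem h1 h2) h3

/-- The candidate subalgebra. -/
def K : LieSubalgebra F (FL F) :=
  { S F with lie_mem' := fun hx hy => lie_S_S_mem F hx hy }

lemma alpha_mem : FL.α F ∈ K F :=
  le_sup_left (α := Submodule F (FL F)) (Submodule.subset_span (Or.inr ⟨0, rfl⟩))

lemma beta_mem : FL.β F ∈ K F :=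
  le_sup_left (α := Submodule F (FL F)) (Submodule.subset_span (Or.inl rfl))

lemma K_eq_top : ∀ x : FL F, x ∈ K F := by
  intro x
  let g : Fin 2 → K F := ![⟨FL.α F, alpha_mem F⟩, ⟨FL.β F, beta_mem F⟩]
  let f : FL F →ₗ⁅F⁆ K F := FreeLieAlgebra.lift F g
  have h : (K F).incl.comp f = LieHom.id := by
    apply FreeLieAlgebra.hom_ext
    intro i
    fin_cases i <;> simp [f, g, FreeLieAlgebra.lift_of_apply, FL.α, FL.β, Matrix.cons_val_zero, Matrix.cons_val_one]
  have hx : (K F).incl (f x) = x := by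
    have := congrArg (fun h => h x) (congrArg (fun h => h.toFun) h)
    simpa using this
  rw [← hx]
  exact (f x).2

end FLaux

/-- The free Lie algebra on `α`, `β` is the sum of the linear span of
`{β} ∪ {(-ad β)^n(α) : n ∈ ℕ}` and the Lie ideal generated by the elements
`(ad α)((-ad β)^n(α))` for `n ≥ 1`. -/
theorem freeLie_eq_span_sup_lieIdeal (F : Type) [Field F] :
    Submodule.span F ({FL.β F} ∪ Set.range (FL.negAdBetaPowAlpha F)) ⊔
      (LieSubmodule.lieSpan F (FL F)
        {x | ∃ n : ℕ, 1 ≤ n ∧ x = ⁅FL.α F, FL.negAdBetaPowAlpha F n⁆} :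
          LieIdeal F (FL F)).toSubmodule = ⊤ := by
  rw [eq_top_iff]
  intro x _
  exact FLaux.K_eq_top F x
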